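/- arXiv:quant-ph/0211011 — 2 statements merged into one kernel-verified Lean document; each statement's English description precedes it below -/
import Mathlib

section
/- Suppose M(G_0) = 1, M(G_2) = 120, M(G_4) = 455, and M(G_6) ≤ 402, where G_i is the subgraph of G_16 induced on even-weight strings of Hamming weight i < 8. Then every independent set of G_16 has size at most 4·(1 + 120 + 455 + 402) = 3912 < 4096, and hence χ(G_16) > 16. -/
/-- The graph `G_16` on 16-bit strings, with edges at Hamming distance 8. -/
def G16 : SimpleGraph (Fin 16 → Bool) where
  Adj u v := hammingDist u v = 8
  symm := ⟨fun u v h => by simpa [hammingDist_comm] using h⟩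
  loopless := ⟨fun u h => by simp [hammingDist_self] at h⟩

/-- The Hamming weight of a bit string. -/
def wt {N : ℕ} (v : Fin N → Bool) : ℕ :=
  (Finset.univ.filter (fun i => v i = true)).card

/-- A finite set of vertices is independent if no two of its members are adjacent. -/
def IsIndep {V : Type*} (G : SimpleGraph V) (s : Finset V) : Prop :=
  ∀ u ∈ s, ∀ v ∈ s, ¬ G.Adj u v

/-!
Translating by a fixed string `a` (coordinatewise `xor`) preserves Hamming distances, so it is an
automorphism of `G_16`, and it sends `v` to a string of weight `d(a, v)`. Since
`d(u, v) ≡ wt u + wt v (mod 2)`, an independent set splits into its even- and odd-weight parts,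
each with pairwise even distances. Translating such a part by one of its members `a` yields an
independent set of even weights with no string of weight `8`, as `a` is sent to `0`;
complementing its strings of weight `> 8` folds it onto two independent sets of even weight `< 8`,
each of size at most `M(G_0) + M(G_2) + M(G_4) + M(G_6) ≤ 978`. Hence `M(G_16) ≤ 4 · 978 = 3912`,
and sixteen colour classes cover at most `16 · 3912 < 2^16` vertices.
-/

open Finset

section BitStrings

variable {N : ℕ}

def xorWith (a v : Fin N → Bool) : Fin N → Bool := fun i => a i ^^ v i

lemma xorWith_involutive (a : Fin N → Bool) : Function.Involutive (xorWith a) := by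
  intro v
  funext i
  simp [xorWith]

lemma hammingDist_xorWith (a u v : Fin N → Bool) :
    hammingDist (xorWith a u) (xorWith a v) = hammingDist u v :=
  hammingDist_comp (fun i => (a i ^^ ·)) fun _ _ _ => Bool.xor_right_inj.1

lemma wt_xorWith (a v : Fin N → Bool) : wt (xorWith a v) = hammingDist a v := by
  simp [wt, hammingDist, xorWith]

lemma wt_xorWith_true_add_wt (v : Fin N → Bool) : wt (xorWith (fun _ => true) v) + wt v = N := by
  have hsplit := card_filter_add_card_filter_not (s := univ) fun i => v i = true
  rw [card_univ, Fintype.card_fin] at hsplit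
  rw [wt_xorWith, hammingDist, wt, add_comm]
  convert hsplit using 3
  ext i
  cases v i <;> simp

lemma hammingDist_add_two_mul (u v : Fin N → Bool) :
    hammingDist u v + 2 * #{i | u i = true ∧ v i = true} = wt u + wt v := by
  simp only [hammingDist, wt, card_filter, mul_sum, ← sum_add_distrib]
  refine sum_congr rfl fun i _ => ?_
  cases u i <;> cases v i <;> rfl

lemma even_hammingDist_iff (u v : Fin N → Bool) :
    Even (hammingDist u v) ↔ (Even (wt u) ↔ Even (wt v)) := by
  rw [← Nat.even_add, ← hammingDist_add_two_mul, Nat.even_add]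
  simp

end BitStrings

section Independence

variable {V W : Type*} {G : SimpleGraph V} {H : SimpleGraph W} {s t : Finset V}

lemma IsIndep.mono (ht : IsIndep G t) (hst : s ⊆ t) : IsIndep G s :=
  fun u hu v hv => ht u (hst hu) v (hst hv)

lemma IsIndep.image [DecidableEq W] {f : V → W} (hs : IsIndep G s)
    (hf : ∀ u v, H.Adj (f u) (f v) → G.Adj u v) : IsIndep H (s.image f) := by
  simp only [IsIndep, mem_image]
  rintro _ ⟨u, hu, rfl⟩ _ ⟨v, hv, rfl⟩ huv
  exact hs u hu v hv (hf u v huv)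

lemma card_le_mul_of_colorable [Fintype V] {n m : ℕ} (hG : G.Colorable n)
    (hm : ∀ s : Finset V, IsIndep G s → #s ≤ m) : Fintype.card V ≤ n * m := by
  obtain ⟨C⟩ := hG
  calc Fintype.card V = ∑ c : Fin n, #{v | C v = c} :=
        card_eq_sum_card_fiberwise fun v _ => mem_coe.2 (mem_univ (C v))
    _ ≤ ∑ _c : Fin n, m := by
        refine sum_le_sum fun c _ => hm _ fun u hu v hv huv => C.valid huv ?_
        rw [(mem_filter.1 hu).2, (mem_filter.1 hv).2]
    _ = n * m := by simp

lemma lt_chromaticNumber_of_forall_card_le [Fintype V] {n m : ℕ}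
    (hm : ∀ s : Finset V, IsIndep G s → #s ≤ m) (hcard : n * m < Fintype.card V) :
    n < G.chromaticNumber := by
  by_contra! hle
  exact hcard.not_ge
    (card_le_mul_of_colorable (SimpleGraph.chromaticNumber_le_iff_colorable.1 hle) hm)

end Independence

lemma IsIndep.image_xorWith {s : Finset (Fin 16 → Bool)} (hs : IsIndep G16 s)
    (a : Fin 16 → Bool) : IsIndep G16 (s.image (xorWith a)) :=
  hs.image fun u v => (hammingDist_xorWith a u v).symm.trans

/-- `M(G_w) ≤ m`. -/
def LayerBound (w m : ℕ) : Prop :=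
  ∀ I : Finset (Fin 16 → Bool), (∀ v ∈ I, wt v = w) → IsIndep G16 I → #I ≤ m

/-- `M(G_{e,<8}) ≤ B`. -/
def LowBound (B : ℕ) : Prop :=
  ∀ S : Finset (Fin 16 → Bool), IsIndep G16 S → (∀ v ∈ S, Even (wt v) ∧ wt v < 8) → #S ≤ B

lemma LayerBound.of_isGreatest {w m : ℕ}
    (h : IsGreatest {k : ℕ | ∃ I : Finset (Fin 16 → Bool),
      (∀ v ∈ I, wt v = w) ∧ IsIndep G16 I ∧ #I = k} m) : LayerBound w m :=
  fun I hw hI => h.2 ⟨I, hw, hI, rfl⟩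

lemma card_le_sum_of_layerBound {ι : Type*} [Fintype ι] {w m : ι → ℕ}
    (hm : ∀ i, LayerBound (w i) (m i)) {S : Finset (Fin 16 → Bool)} (hS : IsIndep G16 S)
    (hw : ∀ v ∈ S, ∃ i, wt v = w i) : #S ≤ ∑ i, m i := by
  have hcover : S ⊆ univ.biUnion fun i => {v ∈ S | wt v = w i} := fun v hv => by
    obtain ⟨i, hi⟩ := hw v hv
    exact mem_biUnion.2 ⟨i, mem_univ i, mem_filter.2 ⟨hv, hi⟩⟩
  calc #S ≤ ∑ i, #{v ∈ S | wt v = w i} := (card_le_card hcover).trans card_biUnion_le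
    _ ≤ ∑ i, m i := sum_le_sum fun i _ =>
        hm i _ (fun v hv => (mem_filter.1 hv).2) (hS.mono (filter_subset _ _))

lemma lowBound_of_layerBound {m₀ m₂ m₄ m₆ : ℕ} (h₀ : LayerBound 0 m₀) (h₂ : LayerBound 2 m₂)
    (h₄ : LayerBound 4 m₄) (h₆ : LayerBound 6 m₆) : LowBound (m₀ + m₂ + m₄ + m₆) := by
  intro S hS hw
  have hm : ∀ i : Fin 4, LayerBound (2 * i) (![m₀, m₂, m₄, m₆] i) := by
    intro i
    fin_cases i
    exacts [h₀, h₂, h₄, h₆]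
  calc #S ≤ ∑ i : Fin 4, ![m₀, m₂, m₄, m₆] i := card_le_sum_of_layerBound hm hS fun v hv => by
        obtain ⟨⟨k, hk⟩, hlt⟩ := hw v hv
        exact ⟨⟨k, by omega⟩, by simp only; omega⟩
    _ = m₀ + m₂ + m₄ + m₆ := by simp [Fin.sum_univ_four, add_assoc]

section LowBound

variable {B : ℕ} {S : Finset (Fin 16 → Bool)}

lemma card_le_two_mul_of_wt_ne_eight (hB : LowBound B) (hS : IsIndep G16 S)
    (hw : ∀ v ∈ S, Even (wt v) ∧ wt v ≠ 8) : #S ≤ 2 * B := by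
  have hlow : #{v ∈ S | wt v < 8} ≤ B :=
    hB _ (hS.mono (filter_subset _ _)) fun v hv => by
      rw [mem_filter] at hv
      exact ⟨(hw v hv.1).1, hv.2⟩
  have hhigh : #{v ∈ S | ¬ wt v < 8} ≤ B := by
    rw [← card_image_of_injective _ (xorWith_involutive fun _ => true).injective]
    refine hB _ ((hS.mono (filter_subset _ _)).image_xorWith _) fun v hv => ?_
    obtain ⟨u, hu, rfl⟩ := mem_image.1 hv
    rw [mem_filter] at hu
    obtain ⟨⟨k, hk⟩, h8⟩ := hw u hu.1
    have hsum := wt_xorWith_true_add_wt u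
    exact ⟨⟨8 - k, by omega⟩, by omega⟩
  have hsplit := card_filter_add_card_filter_not (s := S) fun v => wt v < 8
  omega

lemma card_le_two_mul_of_even_hammingDist (hB : LowBound B) (hS : IsIndep G16 S)
    (hd : ∀ u ∈ S, ∀ v ∈ S, Even (hammingDist u v)) : #S ≤ 2 * B := by
  obtain rfl | ⟨a, ha⟩ := S.eq_empty_or_nonempty
  · simp
  rw [← card_image_of_injective _ (xorWith_involutive a).injective]
  refine card_le_two_mul_of_wt_ne_eight hB (hS.image_xorWith a) fun v hv => ?_
  obtain ⟨u, hu, rfl⟩ := mem_image.1 hv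
  rw [wt_xorWith]
  exact ⟨hd a ha u hu, hS a ha u hu⟩

lemma card_le_four_mul (hB : LowBound B) (hS : IsIndep G16 S) : #S ≤ 4 * B := by
  classical
  have hpart : ∀ p : Prop, #{v ∈ S | Even (wt v) ↔ p} ≤ 2 * B := fun p =>
    card_le_two_mul_of_even_hammingDist hB (hS.mono (filter_subset _ _)) fun u hu v hv => by
      rw [even_hammingDist_iff, (mem_filter.1 hu).2, (mem_filter.1 hv).2]
  have hsplit := card_filter_add_card_filter_not (s := S) fun v => Even (wt v)
  have heven := hpart True
  have hodd := hpart False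
  simp only [iff_true, iff_false] at heven hodd
  omega

end LowBound

/-- If `M(G_0) = 1`, `M(G_2) = 120`, `M(G_4) = 455`, and `M(G_6) ≤ 402`, where
`G_i` is the subgraph of `G_16` induced on strings of Hamming weight `i`, then
every independent set of `G_16` has size at most `4·(1+120+455+402) = 3912`,
and hence `χ(G_16) > 16`. -/
theorem indep_number_G16_le_3912
    (h0 : IsGreatest {k : ℕ | ∃ I : Finset (Fin 16 → Bool),
      (∀ v ∈ I, wt v = 0) ∧ IsIndep G16 I ∧ I.card = k} 1)
    (h2 : IsGreatest {k : ℕ | ∃ I : Finset (Fin 16 → Bool),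
      (∀ v ∈ I, wt v = 2) ∧ IsIndep G16 I ∧ I.card = k} 120)
    (h4 : IsGreatest {k : ℕ | ∃ I : Finset (Fin 16 → Bool),
      (∀ v ∈ I, wt v = 4) ∧ IsIndep G16 I ∧ I.card = k} 455)
    (h6 : ∀ I : Finset (Fin 16 → Bool),
      (∀ v ∈ I, wt v = 6) → IsIndep G16 I → I.card ≤ 402) :
    (∀ I : Finset (Fin 16 → Bool), IsIndep G16 I → I.card ≤ 3912) ∧
      16 < G16.chromaticNumber := by
  have hB : LowBound (1 + 120 + 455 + 402) :=
    lowBound_of_layerBound (.of_isGreatest h0) (.of_isGreatest h2) (.of_isGreatest h4) h6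
  have hindep : ∀ I : Finset (Fin 16 → Bool), IsIndep G16 I → I.card ≤ 3912 :=
    fun I hI => card_le_four_mul hB hI
  exact ⟨hindep, lt_chromaticNumber_of_forall_card_le hindep (by simp)⟩
end

section
/- Conversely, any deterministic winning strategy (f_A, f_B) for the game with parameter n yields a proper coloring of G_{2^n} with at most 2^n colors: in fact f_A = f_B must hold and f_A is a proper coloring. -/
/-- Any deterministic winning strategy `(f_A, f_B)` for the pseudo-telepathy
game with parameter `n` satisfies `f_A = f_B`, and `f_A` is a proper coloring
of `G_{2^n}` with at most `2^n` colors: adjacent vertices (strings at Hamming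
distance `2^{n-1}`) receive distinct colors. -/
theorem winning_strategy_gives_coloring (n : ℕ) (hn : 1 ≤ n)
    (fA fB : (Fin (2 ^ n) → Bool) → (Fin n → Bool))
    (hwin : ∀ xA xB : Fin (2 ^ n) → Bool,
      (hammingDist xA xB = 0 ∨ hammingDist xA xB = 2 ^ (n - 1)) →
      (fA xA = fB xB ↔ xA = xB)) :
    fA = fB ∧
      ∀ u v : Fin (2 ^ n) → Bool, hammingDist u v = 2 ^ (n - 1) →
        fA u ≠ fA v := by
  have hAB : fA = fB := funext fun x =>
    (hwin x x (Or.inl (hammingDist_self x))).mpr rfl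
  refine ⟨hAB, fun u v hd heq => ?_⟩
  have : u = v := (hwin u v (Or.inr hd)).mp (by rw [← hAB]; exact heq)
  rw [this, hammingDist_self] at hd
  exact (pow_ne_zero _ two_ne_zero) hd.symm
end
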